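/- arXiv:math/9912047 — 2 statements merged into one kernel-verified Lean document; each statement's English description precedes it below -/
import Mathlib

section
/- If G is a graph without isolated vertices and |core(G)| ≤ 1, then every stable set S of G satisfies |S| ≤ |N(S)| (i.e., G is quasi-regularizable). -/
open Finset

variable {V : Type*} [Fintype V] [DecidableEq V]

/-  A set of vertices is stable (independent) if no two of its vertices are adjacent. -/
def stable (G : SimpleGraph V) (S : Finset V) : Prop :=
  ∀ a ∈ S, ∀ b ∈ S, ¬ G.Adj a b

/-  The (open) neighborhood of a set of vertices. -/
open Classical in
noncomputable def nbhd (G : SimpleGraph V) (A : Finset V) : Finset V :=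
  Finset.univ.filter fun v => ∃ a ∈ A, G.Adj a v

/-  The stability number: maximum size of a stable set. -/
open Classical in
noncomputable def alpha (G : SimpleGraph V) : ℕ :=
  Finset.univ.sup fun S : Finset V => if stable G S then S.card else 0

/-  A maximum stable set. -/
def maxStable (G : SimpleGraph V) (S : Finset V) : Prop :=
  stable G S ∧ S.card = alpha G

/-  core(G): the intersection of all maximum stable sets. -/
open Classical in
noncomputable def core (G : SimpleGraph V) : Finset V :=
  Finset.univ.filter fun v => ∀ S : Finset V, maxStable G S → v ∈ S

/-  A vertex is isolated if it has no neighbors. -/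
def isolated (G : SimpleGraph V) (v : V) : Prop := ∀ w, ¬ G.Adj v w

/-  The set of isolated vertices. -/
open Classical in
noncomputable def isol (G : SimpleGraph V) : Finset V :=
  Finset.univ.filter fun v => isolated G v

lemma mem_nbhd {G : SimpleGraph V} {A : Finset V} {v : V} :
    v ∈ nbhd G A ↔ ∃ a ∈ A, G.Adj a v := by
  classical
  simp [nbhd]

lemma nbhd_mono {G : SimpleGraph V} {A B : Finset V} (h : A ⊆ B) :
    nbhd G A ⊆ nbhd G B := by
  intro v hv
  rw [mem_nbhd] at *
  obtain ⟨a, ha, hav⟩ := hv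
  exact ⟨a, h ha, hav⟩

lemma stable_mono {G : SimpleGraph V} {A B : Finset V} (h : A ⊆ B) (hB : stable G B) :
    stable G A := fun a ha b hb => hB a (h ha) b (h hb)

lemma stable_card_le_alpha {G : SimpleGraph V} {S : Finset V} (hS : stable G S) :
    S.card ≤ alpha G := by
  classical
  have h := Finset.le_sup (f := fun S : Finset V => if stable G S then S.card else 0)
      (Finset.mem_univ S)
  simpa [alpha, hS] using h

/-- Exchange lemma: if `K` is stable and `A` is a maximum stable set, then
`A` has at least `|K \ A|` vertices in the neighborhood of `K \ A`. -/
lemma exchange {G : SimpleGraph V} {K A : Finset V} (hK : stable G K) (hA : maxStable G A) :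
    (K \ A).card ≤ (A ∩ nbhd G (K \ A)).card := by
  classical
  set B := K \ A with hB
  set N := nbhd G B with hN
  have hstar : stable G ((A \ N) ∪ B) := by
    intro a ha b hb hadj
    rcases Finset.mem_union.1 ha with ha' | ha' <;>
      rcases Finset.mem_union.1 hb with hb' | hb'
    · exact hA.1 a (Finset.mem_sdiff.1 ha').1 b (Finset.mem_sdiff.1 hb').1 hadj
    · exact (Finset.mem_sdiff.1 ha').2 (mem_nbhd.2 ⟨b, hb', (G.adj_symm hadj)⟩)
    · exact (Finset.mem_sdiff.1 hb').2 (mem_nbhd.2 ⟨a, ha', hadj⟩)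
    · exact hK a (Finset.sdiff_subset ha') b (Finset.sdiff_subset hb') hadj
  have hdisj : Disjoint (A \ N) B := by
    refine Finset.disjoint_left.2 ?_
    intro x hx hxB
    exact (Finset.mem_sdiff.1 hxB).2 (Finset.mem_sdiff.1 hx).1
  have hcard : ((A \ N) ∪ B).card = (A \ N).card + B.card :=
    Finset.card_union_of_disjoint hdisj
  have hle : ((A \ N) ∪ B).card ≤ A.card := by
    rw [hA.2]; exact stable_card_le_alpha hstar
  have hAN : A \ N = A \ (A ∩ N) := by
    rw [Finset.sdiff_inter_self_left]
  have hcard2 : (A \ N).card = A.card - (A ∩ N).card := by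
    rw [hAN, Finset.card_sdiff_of_subset Finset.inter_subset_left]
  have hANle : (A ∩ N).card ≤ A.card := Finset.card_le_card Finset.inter_subset_left
  omega

/-  If G has no isolated vertices and |core(G)| ≤ 1, then G is quasi-regularizable,
i.e. |S| ≤ |N(S)| for every stable set S. -/
theorem stmt3 (G : SimpleGraph V) (hisol : ∀ v : V, ¬ isolated G v)
    (hcore : (core G).card ≤ 1) :
    ∀ S : Finset V, stable G S → S.card ≤ (nbhd G S).card := by
  classical
  by_contra hcon
  push_neg at hcon
  obtain ⟨S0, hS0stable, hS0⟩ := hcon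
  set d : Finset V → ℤ := fun S => (S.card : ℤ) - (nbhd G S).card with hd
  set F : Finset (Finset V) := Finset.univ.filter (fun S => stable G S) with hF
  have hS0F : S0 ∈ F := by simp [hF, hS0stable]
  obtain ⟨M, hMF, hMmax⟩ := F.exists_max_image d ⟨S0, hS0F⟩
  have dd : ∀ S : Finset V, d S = (S.card : ℤ) - ((nbhd G S).card : ℤ) := fun S => rfl
  have hdM : 1 ≤ d M := by
    have h2 := hMmax S0 hS0F
    rw [dd, dd] at h2
    rw [dd]
    omega
  set F2 : Finset (Finset V) := F.filter (fun S => d S = d M) with hF2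
  have hMF2 : M ∈ F2 := by simp [hF2, hMF]
  obtain ⟨K, hKF2, hKmin⟩ := F2.exists_min_image Finset.card ⟨M, hMF2⟩
  have hKstable : stable G K := by
    have := (Finset.mem_filter.1 ((Finset.mem_filter.1 hKF2).1)).2
    exact this
  have hdK : d K = d M := (Finset.mem_filter.1 hKF2).2
  -- Claim: K is contained in every maximum stable set.
  have hclaim : ∀ A : Finset V, maxStable G A → K ⊆ A := by
    intro A hA
    have hii := exchange hKstable hA
    -- N(K ∩ A) ⊆ N(K) \ (A ∩ N(K \ A))
    have hsub : nbhd G (K ∩ A) ⊆ nbhd G K \ (A ∩ nbhd G (K \ A)) := by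
      intro w hw
      obtain ⟨s, hs, hadj⟩ := mem_nbhd.1 hw
      refine Finset.mem_sdiff.2 ⟨mem_nbhd.2 ⟨s, Finset.mem_inter.1 hs |>.1, hadj⟩, ?_⟩
      intro hwmem
      exact hA.1 s (Finset.mem_inter.1 hs).2 w (Finset.mem_inter.1 hwmem).1 hadj
    have hANsub : A ∩ nbhd G (K \ A) ⊆ nbhd G K :=
      Finset.inter_subset_right.trans (nbhd_mono Finset.sdiff_subset)
    have hc1 : (nbhd G (K ∩ A)).card ≤ (nbhd G K \ (A ∩ nbhd G (K \ A))).card :=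
      Finset.card_le_card hsub
    have hc2 : (nbhd G K \ (A ∩ nbhd G (K \ A))).card
        = (nbhd G K).card - (A ∩ nbhd G (K \ A)).card :=
      Finset.card_sdiff_of_subset hANsub
    have hc3 : (A ∩ nbhd G (K \ A)).card ≤ (nbhd G K).card := Finset.card_le_card hANsub
    have hc4 : (K ∩ A).card + (K \ A).card = K.card := Finset.card_inter_add_card_sdiff K A
    -- d(K ∩ A) ≥ d K
    have hKA_stable : stable G (K ∩ A) := stable_mono Finset.inter_subset_left hKstable
    have hKAF : K ∩ A ∈ F := by simp [hF, hKA_stable]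
    have hdle : d (K ∩ A) ≤ d M := hMmax _ hKAF
    have hdge : d K ≤ d (K ∩ A) := by
      rw [dd, dd]
      omega
    have hdeq : d (K ∩ A) = d M := le_antisymm hdle (hdK ▸ hdge)
    have hKAF2 : K ∩ A ∈ F2 := by
      rw [hF2, Finset.mem_filter]
      exact ⟨hKAF, hdeq⟩
    have hcardle : K.card ≤ (K ∩ A).card := hKmin _ hKAF2
    have heq : K ∩ A = K := Finset.eq_of_subset_of_card_le Finset.inter_subset_left hcardle
    intro v hv
    have : v ∈ K ∩ A := by rw [heq]; exact hv
    exact (Finset.mem_inter.1 this).2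
  -- K ⊆ core G
  have hKcore : K ⊆ core G := by
    intro v hv
    rw [core, Finset.mem_filter]
    exact ⟨Finset.mem_univ v, fun S hS => hclaim S hS hv⟩
  -- |K| ≥ 2
  have hKpos : 0 < K.card := by
    by_contra h
    push_neg at h
    interval_cases hc : K.card
    · have : K = ∅ := Finset.card_eq_zero.1 hc
      have hdKe := hdK
      rw [this, dd, dd] at hdKe
      have hne : nbhd G (∅ : Finset V) = ∅ := by
        ext v; simp [mem_nbhd]
      rw [hne] at hdKe
      have h1 : (1:ℤ) ≤ d M := hdM
      rw [dd] at h1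
      simp at hdKe
      omega
  obtain ⟨v, hv⟩ := Finset.card_pos.1 hKpos
  have hnb : 0 < (nbhd G K).card := by
    have := hisol v
    rw [isolated] at this
    push_neg at this
    obtain ⟨w, hw⟩ := this
    exact Finset.card_pos.2 ⟨w, mem_nbhd.2 ⟨v, hv, hw⟩⟩
  have hK2 : 2 ≤ K.card := by
    have h1 : (1 : ℤ) ≤ d K := hdK ▸ hdM
    rw [dd] at h1
    omega
  have : 2 ≤ (core G).card := le_trans hK2 (Finset.card_le_card hKcore)
  omega
end

section
/- If G is a graph with α(G) > |V(G)|/2 and |core(G)| ≤ 1, then G has exactly one isolated vertex v, core(G) = {v}, core(G - v) = ∅, and α(G - v) = (|V(G)| - 1)/2; in particular |V(G)| is odd. -/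
open Finset

variable {V : Type*} [Fintype V] [DecidableEq V]


/-!
The Hammer–Hansen–Simeone inequality 2α(G) ≤ |V(G)| + |core(G)| forces core(G) = {v} and
2α(G) = |V(G)| + 1. Deleting the closed neighbourhood N[v] of a core vertex lowers α by exactly
one, and the core of what remains is empty, since it would lie in core(G) \ {v}. If v had a
neighbour, G - N[v] would have at most |V(G)| - 2 vertices, and the same inequality applied to
it would give 2α(G) - 2 ≤ |V(G)| - 2, a contradiction.

The inequality itself comes from the exchange bound |A| ≤ |S ∩ N(A)| for a stable set A
disjoint from a maximum stable set S, which gives 2α ≤ |⋃ F| + |⋂ F| for every nonempty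
family F of maximum stable sets by induction on F.
-/

namespace stable

variable {G : SimpleGraph V} {S T : Finset V}

omit [Fintype V] [DecidableEq V] in
theorem mono (h : stable G T) (hST : S ⊆ T) : stable G S :=
  fun a ha b hb => h a (hST ha) b (hST hb)

omit [Fintype V] in
theorem insert (h : stable G S) {v : V} (hv : ∀ x ∈ S, ¬ G.Adj v x) :
    stable G (insert v S) := by
  intro a ha b hb hab
  rcases mem_insert.1 ha with rfl | haS <;> rcases mem_insert.1 hb with rfl | hbS
  · exact G.irrefl hab
  · exact hv b hbS hab
  · exact hv a haS hab.symm
  · exact h a haS b hbS hab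

omit [Fintype V] [DecidableEq V] in
theorem subtype (h : stable G S) {p : V → Prop} [DecidablePred p] :
    stable (G.comap (Subtype.val : {x // p x} → V)) (S.subtype p) :=
  fun a ha b hb => h a (mem_subtype.1 ha) b (mem_subtype.1 hb)

omit [Fintype V] [DecidableEq V] in
theorem map_subtype {p : V → Prop} {S : Finset {x // p x}}
    (h : stable (G.comap (Subtype.val : {x // p x} → V)) S) :
    stable G (S.map (Function.Embedding.subtype p)) := by
  simp only [stable, mem_map, Function.Embedding.subtype_apply]
  rintro _ ⟨a, ha, rfl⟩ _ ⟨b, hb, rfl⟩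
  exact h a ha b hb

omit [DecidableEq V] in
theorem card_le_alpha (h : stable G S) : #S ≤ alpha G := by
  classical
  calc #S = if stable G S then #S else 0 := (if_pos h).symm
    _ ≤ alpha G := le_sup (f := fun T : Finset V => if stable G T then #T else 0) (mem_univ S)

end stable

variable (G : SimpleGraph V)

omit [DecidableEq V] in
theorem exists_maxStable : ∃ S, maxStable G S := by
  classical
  obtain ⟨S, -, hS⟩ :=
    exists_mem_eq_sup univ univ_nonempty fun S : Finset V => if stable G S then #S else 0
  by_cases hst : stable G S
  · exact ⟨S, hst, by unfold alpha; rw [hS, if_pos hst]⟩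
  · refine ⟨∅, fun a ha => absurd ha (notMem_empty a), ?_⟩
    unfold alpha
    rw [hS, if_neg hst, card_empty]

theorem mem_core_iff {v : V} : v ∈ core G ↔ ∀ S, maxStable G S → v ∈ S := by
  unfold core
  simp

theorem isolated_mem_core {v : V} (hv : isolated G v) : v ∈ core G := by
  refine (mem_core_iff G).2 fun S hS => ?_
  by_contra hvS
  have := (hS.1.insert fun x _ => hv x).card_le_alpha
  rw [card_insert_of_notMem hvS, hS.2] at this
  omega

theorem isol_subset_core : isol G ⊆ core G := by
  classical
  exact fun _ hv => isolated_mem_core G (mem_filter.1 hv).2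

variable {G}

theorem card_le_card_inter_nbhd {A S : Finset V} (hA : stable G A) (hS : maxStable G S)
    (hAS : Disjoint A S) : #A ≤ #(S ∩ nbhd G A) := by
  have hstable : stable G (A ∪ (S \ nbhd G A)) := by
    intro a ha b hb hab
    simp only [mem_union, mem_sdiff, nbhd, mem_filter, mem_univ, true_and, not_exists,
      not_and] at ha hb
    rcases ha with ha | ⟨haS, haN⟩ <;> rcases hb with hb | ⟨hbS, hbN⟩
    · exact hA a ha b hb hab
    · exact hbN a ha hab
    · exact haN b hb hab.symm
    · exact hS.1 a haS b hbS hab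
  have hcard := hstable.card_le_alpha
  rw [card_union_of_disjoint (hAS.mono_right sdiff_subset), ← hS.2] at hcard
  have := card_sdiff_add_card_inter S (nbhd G A)
  omega

theorem two_mul_alpha_le_card_sup_add_card_inf {F : Finset (Finset V)} (hF : F.Nonempty)
    (hmax : ∀ S ∈ F, maxStable G S) : 2 * alpha G ≤ #(F.sup id) + #(F.inf id) := by
  induction hF using Nonempty.cons_induction with
  | singleton S =>
    have := (hmax S (mem_singleton_self S)).2
    simp only [sup_singleton, inf_singleton, id_eq]
    omega
  | cons S F hSF hF ih =>
    obtain ⟨hS, hmaxF⟩ := (forall_mem_cons hSF _).1 hmax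
    have ih := ih hmaxF
    rw [sup_cons, inf_cons, id_eq, sup_eq_union, inf_eq_inter, inter_comm]
    set U := F.sup id
    set I := F.inf id
    have hI : ∀ {T}, T ∈ F → I ⊆ T := fun hT => inf_le (f := id) hT
    obtain ⟨T₀, hT₀⟩ := hF
    -- no vertex of `S` adjacent to `I \ S` lies in `U`: it would share a stable set with `I`
    have hexchange : #(I \ S) ≤ #(S \ U) := by
      refine (card_le_card_inter_nbhd ((hmaxF T₀ hT₀).1.mono (sdiff_subset.trans (hI hT₀))) hS
        disjoint_sdiff_self_left).trans (card_le_card fun y hy => ?_)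
      simp only [mem_inter, nbhd, mem_filter, mem_univ, true_and] at hy
      obtain ⟨hyS, x, hx, hxy⟩ := hy
      refine mem_sdiff.2 ⟨hyS, fun hyU => ?_⟩
      obtain ⟨T, hT, hyT⟩ := mem_sup.1 hyU
      exact (hmaxF T hT).1 x (hI hT (mem_sdiff.1 hx).1) y hyT hxy
    have := card_union_add_card_inter S U
    have := card_sdiff_add_card_inter I S
    have := card_sdiff_add_card_inter S U
    have := hS.2
    omega

variable (G)

theorem two_mul_alpha_le_card_add_card_core : 2 * alpha G ≤ Fintype.card V + #(core G) := by
  classical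
  let F := univ.filter (maxStable G)
  have hF : F.Nonempty :=
    let ⟨S, hS⟩ := exists_maxStable G
    ⟨S, mem_filter.2 ⟨mem_univ S, hS⟩⟩
  have hinf : F.inf id ⊆ core G := fun _ hv =>
    (mem_core_iff G).2 fun S hS => inf_le (f := id) (mem_filter.2 ⟨mem_univ S, hS⟩) hv
  calc 2 * alpha G ≤ #(F.sup id) + #(F.inf id) :=
        two_mul_alpha_le_card_sup_add_card_inf hF fun S hS => (mem_filter.1 hS).2
    _ ≤ Fintype.card V + #(core G) := add_le_add (card_le_univ _) (card_le_card hinf)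

section DeleteClosedNbhd

variable {G} {v : V} {p : V → Prop} (hp : ∀ x, p x ↔ x ≠ v ∧ ¬ G.Adj v x)
include hp

omit [Fintype V] in
theorem card_subtype_add_one [DecidablePred p] {S : Finset V} (hS : stable G S) (hvS : v ∈ S) :
    #(S.subtype p) + 1 = #S := by
  have hfilter : S.filter p = S.erase v := by
    ext x
    simp only [mem_filter, mem_erase, hp]
    exact ⟨fun h => ⟨h.2.1, h.1⟩, fun h => ⟨h.2, h.1, hS v hvS x h.2⟩⟩
  rw [card_subtype, hfilter, card_erase_add_one hvS]

variable [Fintype {x // p x}]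

theorem alpha_comap_add_one (hv : v ∈ core G) :
    alpha (G.comap (Subtype.val : {x // p x} → V)) + 1 = alpha G := by
  classical
  apply le_antisymm
  · obtain ⟨S, hS, hcard⟩ := exists_maxStable (G.comap (Subtype.val : {x // p x} → V))
    have hp' : ∀ x ∈ S.map (Function.Embedding.subtype p), x ≠ v ∧ ¬ G.Adj v x := by
      simp only [mem_map, Function.Embedding.subtype_apply]
      rintro _ ⟨x, -, rfl⟩
      exact (hp x).1 x.2
    have hcard' := (hS.map_subtype.insert fun x hx => (hp' x hx).2).card_le_alpha
    rw [card_insert_of_notMem fun hv => (hp' v hv).1 rfl, card_map, hcard] at hcard'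
    exact hcard'
  · obtain ⟨S, hS⟩ := exists_maxStable G
    have := card_subtype_add_one hp hS.1 ((mem_core_iff G).1 hv S hS)
    have := (hS.1.subtype (p := p)).card_le_alpha
    have := hS.2
    omega

theorem core_comap_eq_empty (hv : core G = {v}) :
    core (G.comap (Subtype.val : {x // p x} → V)) = ∅ := by
  classical
  have hvcore : v ∈ core G := hv ▸ mem_singleton_self v
  refine eq_empty_iff_forall_notMem.2 fun u hu => ((hp u).1 u.2).1 ?_
  -- every maximum stable set of `G` is `v` plus a maximum stable set of the deleted graph
  suffices (u : V) ∈ core G by rwa [hv, mem_singleton] at this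
  refine (mem_core_iff G).2 fun S hS =>
    mem_subtype.1 ((mem_core_iff _).1 hu (S.subtype p) ⟨hS.1.subtype, ?_⟩)
  have := card_subtype_add_one hp hS.1 ((mem_core_iff G).1 hvcore S hS)
  have := alpha_comap_add_one hp hvcore
  have := hS.2
  omega

end DeleteClosedNbhd

theorem isolated_of_core_eq_singleton {v : V} (hv : core G = {v})
    (hα : Fintype.card V < 2 * alpha G) : isolated G v := by
  classical
  intro w hvw
  let p : V → Prop := fun x => x ≠ v ∧ ¬ G.Adj v x
  have hp : ∀ x, p x ↔ x ≠ v ∧ ¬ G.Adj v x := fun _ => Iff.rfl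
  have hcard : Fintype.card {x // p x} + 2 ≤ Fintype.card V := by
    have hsub : ({x | p x} : Finset V) ⊆ (univ.erase v).erase w := fun x hx => by
      simp only [mem_filter, mem_univ, true_and, p] at hx
      exact mem_erase.2 ⟨fun h => hx.2 (h ▸ hvw), mem_erase.2 ⟨hx.1, mem_univ x⟩⟩
    have := card_le_card hsub
    have := card_erase_add_one (mem_erase.2 ⟨(G.ne_of_adj hvw).symm, mem_univ w⟩)
    have := card_erase_add_one (mem_univ v)
    rw [Fintype.card_subtype, ← card_univ]
    omega
  have hH := two_mul_alpha_le_card_add_card_core (G.comap (Subtype.val : {x // p x} → V))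
  rw [core_comap_eq_empty hp hv, card_empty] at hH
  have := alpha_comap_add_one hp (hv ▸ mem_singleton_self v)
  omega

theorem stmt5 (G : SimpleGraph V) (h1 : Fintype.card V < 2 * alpha G)
    (h2 : (core G).card ≤ 1) :
    ∃ v : V, isol G = {v} ∧ core G = {v} ∧
      core (SimpleGraph.comap (Subtype.val : {x : V // x ≠ v} → V) G) = ∅ ∧
      2 * alpha (SimpleGraph.comap (Subtype.val : {x : V // x ≠ v} → V) G)
        = Fintype.card V - 1 ∧
      Odd (Fintype.card V) := by
  have hhs := two_mul_alpha_le_card_add_card_core G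
  obtain ⟨v, hv⟩ := card_eq_one.1 (by omega : #(core G) = 1)
  rw [hv, card_singleton] at hhs
  have hiso : isolated G v := isolated_of_core_eq_singleton G hv h1
  have hp : ∀ x, x ≠ v ↔ x ≠ v ∧ ¬ G.Adj v x := fun x => (and_iff_left (hiso x)).symm
  have hα := alpha_comap_add_one hp (hv ▸ mem_singleton_self v)
  refine ⟨v, ?_, hv, core_comap_eq_empty hp hv, by omega, ⟨alpha G - 1, by omega⟩⟩
  classical
  exact Subset.antisymm (hv ▸ isol_subset_core G)
    (singleton_subset_iff.2 (mem_filter.2 ⟨mem_univ v, hiso⟩))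
end
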